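/- Let C_k(𝒜, v) be a generalized affine Cartesian code with 1 ≤ k ≤ Σ_{i=1}^m (n_i − 1). Then the dual code of C_k(𝒜, v) is C_k(𝒜, v)^⊥ = C_{k′}(𝒜, v′), where k′ := Σ_{i=1}^m (n_i − 1) − k + 1 and v′ = (v_1′, …, v_n′) is given by v_i′ := (v_i · L_{a_i}(a_i))^{−1}. -/

import Mathlib

open MvPolynomial

/-- The points of the Cartesian set `𝒜 = A 0 × ⋯ × A (m-1)`. -/
abbrev CartPts {K : Type*} {m : ℕ} (A : Fin m → Finset K) :=
  { x : Fin m → K // ∀ i, x i ∈ A i }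

/-- The space `S_{<k}` of multivariate polynomials of total degree less than `k`. -/
def degLT (K : Type*) [Field K] (m k : ℕ) : Submodule K (MvPolynomial (Fin m) K) where
  carrier := {f | ∀ d ∈ f.support, (d.sum fun _ e => e) < k}
  zero_mem' := by simp
  add_mem' := fun {f g} hf hg d hd => by
    rcases Finset.mem_union.mp (MvPolynomial.support_add hd) with h | h
    exacts [hf d h, hg d h]
  smul_mem' := fun c f hf d hd => hf d (MvPolynomial.support_smul hd)

/-- The evaluation map `ev : f ↦ (v_a · f(a))_{a ∈ 𝒜}`. -/
noncomputable def evalLM {K : Type*} [Field K] {m : ℕ} (A : Fin m → Finset K)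
    (v : CartPts A → K) : MvPolynomial (Fin m) K →ₗ[K] (CartPts A → K) :=
  LinearMap.pi fun a => v a • (MvPolynomial.aeval (a.1 : Fin m → K)).toLinearMap

/-- The generalized affine Cartesian code `C_k(𝒜, v)`, the image of `S_{<k}` under `ev_k`. -/
noncomputable def cartCode {K : Type*} [Field K] {m : ℕ} (k : ℕ) (A : Fin m → Finset K)
    (v : CartPts A → K) : Submodule K (CartPts A → K) :=
  Submodule.map (evalLM A v) (degLT K m k)

/-- The dual code `C^⊥` with respect to the standard dot product. -/
def dualCode {K : Type*} [Field K] {ι : Type*} [Fintype ι] (C : Submodule K (ι → K)) :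
    Submodule K (ι → K) where
  carrier := {w | ∀ c ∈ C, ∑ i, w i * c i = 0}
  zero_mem' := by simp
  add_mem' := fun {w w'} hw hw' c hc => by
    simp only [Pi.add_apply, add_mul, Finset.sum_add_distrib, hw c hc, hw' c hc, add_zero]
  smul_mem' := fun r w hw c hc => by
    simp only [Pi.smul_apply, smul_eq_mul, mul_assoc, ← Finset.mul_sum, hw c hc, mul_zero]

/-- A linear code is LCD if it meets its dual trivially. -/
def IsLCD {K : Type*} [Field K] {ι : Type*} [Fintype ι] (C : Submodule K (ι → K)) : Prop :=
  C ⊓ dualCode C = ⊥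

/-- For a point `α` of `𝒜`, the polynomial `L_α(X) = ∏ i, L_i(X_i)/(X_i − α_i)`. -/
noncomputable def LaPoly {K : Type*} [Field K] [DecidableEq K] {m : ℕ} (A : Fin m → Finset K)
    (α : Fin m → K) : MvPolynomial (Fin m) K :=
  ∏ i, ∏ c ∈ (A i).erase (α i), (MvPolynomial.X i - MvPolynomial.C c)

set_option linter.unusedSectionVars false
set_option linter.unusedVariables false

-- ===== auxiliary development =====
section Aux1
open Polynomial
variable {K : Type*} [Field K] [DecidableEq K]

noncomputable def vanish (s : Finset K) : Polynomial K := ∏ c ∈ s, (Polynomial.X - Polynomial.C c)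

lemma monic_vanish (s : Finset K) : (vanish s).Monic :=
  monic_prod_of_monic _ _ fun c _ => monic_X_sub_C c

lemma natDegree_vanish (s : Finset K) : (vanish s).natDegree = s.card := by
  rw [vanish, natDegree_prod_of_monic _ _ fun c _ => monic_X_sub_C c]
  simp

lemma degree_vanish (s : Finset K) : (vanish s).degree = s.card := by
  rw [Polynomial.degree_eq_natDegree (monic_vanish s).ne_zero, natDegree_vanish]

lemma eval_vanish_eq_zero {s : Finset K} {a : K} (ha : a ∈ s) : (vanish s).eval a = 0 := by
  rw [vanish, Polynomial.eval_prod]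
  exact Finset.prod_eq_zero ha (by simp)

noncomputable def redPow (s : Finset K) (e : ℕ) : Polynomial K := (Polynomial.X ^ e) %ₘ vanish s

lemma redPow_natDegree_lt (s : Finset K) (hs : s.Nonempty) (e : ℕ) :
    (redPow s e).natDegree < s.card := by
  have h1 : vanish s ≠ 1 := by
    intro h
    have h2 := natDegree_vanish s
    rw [h, natDegree_one] at h2
    exact absurd h2.symm (Finset.card_pos.mpr hs).ne'
  have := Polynomial.natDegree_modByMonic_lt (Polynomial.X ^ e) (monic_vanish s) h1
  rwa [natDegree_vanish] at this

lemma redPow_natDegree_le (s : Finset K) (e : ℕ) : (redPow s e).natDegree ≤ e := by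
  rcases Nat.lt_or_ge e s.card with h | h
  · have heq : redPow s e = Polynomial.X ^ e := by
      rw [redPow, (Polynomial.modByMonic_eq_self_iff (monic_vanish s)).mpr]
      rw [degree_X_pow, degree_vanish]
      exact_mod_cast h
    rw [heq, natDegree_X_pow]
  · rcases s.eq_empty_or_nonempty with rfl | hs
    · simp [redPow, vanish]
    · exact le_trans (redPow_natDegree_lt s hs e).le h

lemma redPow_eval (s : Finset K) (e : ℕ) {a : K} (ha : a ∈ s) :
    (redPow s e).eval a = a ^ e := by
  have h := Polynomial.modByMonic_add_div (Polynomial.X ^ e) (vanish s)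
  have h2 := congrArg (Polynomial.eval a) h
  simp only [Polynomial.eval_add, Polynomial.eval_mul, Polynomial.eval_pow, Polynomial.eval_X, eval_vanish_eq_zero ha, zero_mul,
    add_zero] at h2
  exact h2

lemma coeff_lagrange_basis (s : Finset K) {α : K} (hα : α ∈ s) :
    (Lagrange.basis s id α).coeff (s.card - 1) = ∏ c ∈ s.erase α, (α - c)⁻¹ := by
  unfold Lagrange.basis Lagrange.basisDivisor
  rw [Finset.prod_mul_distrib, ← map_prod]
  have hm : (∏ c ∈ s.erase α, (Polynomial.X - Polynomial.C (id c))).Monic :=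
    monic_prod_of_monic _ _ fun c _ => monic_X_sub_C _
  have hd : (∏ c ∈ s.erase α, (Polynomial.X - Polynomial.C (id c))).natDegree = s.card - 1 := by
    rw [natDegree_prod_of_monic _ _ fun c _ => monic_X_sub_C _]
    simp [Finset.card_erase_of_mem hα]
  rw [Polynomial.coeff_C_mul, ← hd, hm.coeff_natDegree, mul_one]
  simp

lemma sum_pow_mul_inv_prod (s : Finset K) (e : ℕ) (he : e + 1 < s.card) :
    ∑ α ∈ s, α ^ e * (∏ c ∈ s.erase α, (α - c))⁻¹ = 0 := by
  have hdeg : (Polynomial.X ^ e : Polynomial K).degree < s.card := by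
    rw [degree_X_pow]
    exact_mod_cast (by omega : e < s.card)
  have h := Lagrange.eq_interpolate (f := (Polynomial.X ^ e : Polynomial K))
    (Set.injOn_id _) hdeg
  have h2 := congrArg (fun p => Polynomial.coeff p (s.card - 1)) h
  simp only [Lagrange.interpolate_apply, Polynomial.finset_sum_coeff, Polynomial.coeff_C_mul,
    Polynomial.coeff_X_pow, id_eq, Polynomial.eval_pow, Polynomial.eval_X] at h2
  rw [if_neg (by omega)] at h2
  calc ∑ α ∈ s, α ^ e * (∏ c ∈ s.erase α, (α - c))⁻¹
      = ∑ α ∈ s, α ^ e * (Lagrange.basis s id α).coeff (s.card - 1) := by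
        refine Finset.sum_congr rfl fun α hα => ?_
        rw [coeff_lagrange_basis s hα, Finset.prod_inv_distrib]
    _ = 0 := h2.symm

end Aux1

section Aux

variable {K : Type*} [Field K] [DecidableEq K] {m : ℕ} (A : Fin m → Finset K)

noncomputable def ev0 : MvPolynomial (Fin m) K →ₗ[K] (CartPts A → K) :=
  LinearMap.pi fun a => (MvPolynomial.aeval (a.1 : Fin m → K)).toLinearMap

lemma ev0_apply (f : MvPolynomial (Fin m) K) (a : CartPts A) :
    ev0 A f a = eval (a.1 : Fin m → K) f := by
  show (MvPolynomial.aeval (a.1 : Fin m → K)) f = _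
  rw [MvPolynomial.aeval_def, Algebra.algebraMap_self, MvPolynomial.eval₂_id]

def emon (d : Fin m → ℕ) : CartPts A → K := fun a => ∏ i, (a.1 i) ^ (d i)

def fullbox : Finset (Fin m → ℕ) := Fintype.piFinset fun i => Finset.range (A i).card

def boxk (k : ℕ) : Finset (Fin m → ℕ) := (fullbox A).filter fun d => ∑ i, d i < k

lemma eval_LaPoly (α x : Fin m → K) :
    eval x (LaPoly A α) = ∏ i, ∏ c ∈ (A i).erase (α i), (x i - c) := by
  simp [LaPoly]

lemma eval_LaPoly_self_ne_zero {α : Fin m → K} (hα : ∀ i, α i ∈ A i) :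
    eval α (LaPoly A α) ≠ 0 := by
  rw [eval_LaPoly]
  refine Finset.prod_ne_zero_iff.mpr fun i _ => Finset.prod_ne_zero_iff.mpr fun c hc => ?_
  exact sub_ne_zero.mpr (Finset.ne_of_mem_erase hc).symm

lemma ev0_LaPoly [Fintype K] (a : CartPts A) :
    ev0 A (LaPoly A a.1) =
      fun b => if a = b then eval (a.1 : Fin m → K) (LaPoly A a.1) else 0 := by
  funext b
  rw [ev0_apply, eval_LaPoly]
  by_cases h : a = b
  · rw [if_pos h, ← h, eval_LaPoly]
  · rw [if_neg h]
    have hex : ∃ i, b.1 i ≠ a.1 i := by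
      by_contra hc
      push_neg at hc
      exact h (Subtype.ext (funext fun i => hc i)).symm
    obtain ⟨i, hi⟩ := hex
    refine Finset.prod_eq_zero (Finset.mem_univ i) ?_
    refine Finset.prod_eq_zero (Finset.mem_erase.mpr ⟨hi, b.2 i⟩) ?_
    simp

lemma totalDegree_LaPoly_le {α : Fin m → K} (hα : ∀ i, α i ∈ A i) :
    (LaPoly A α).totalDegree ≤ ∑ i, ((A i).card - 1) := by
  refine le_trans (MvPolynomial.totalDegree_finset_prod _ _) (Finset.sum_le_sum fun i _ => ?_)
  refine le_trans (MvPolynomial.totalDegree_finset_prod _ _) ?_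
  calc ∑ c ∈ (A i).erase (α i), (MvPolynomial.X i - MvPolynomial.C c).totalDegree
      ≤ ∑ c ∈ (A i).erase (α i), 1 := by
        refine Finset.sum_le_sum fun c _ => ?_
        refine le_trans (MvPolynomial.totalDegree_sub _ _) ?_
        simp [MvPolynomial.totalDegree_X]
    _ = (A i).card - 1 := by rw [Finset.sum_const, smul_eq_mul, mul_one,
        Finset.card_erase_of_mem (hα i)]

end Aux

section Aux2

variable {K : Type*} [Field K] [DecidableEq K] {m : ℕ} (A : Fin m → Finset K)

lemma emon_mem_span [Fintype K] (hA : ∀ i, (A i).Nonempty) {k : ℕ} {d : Fin m → ℕ}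
    (hd : ∑ i, d i < k) :
    emon A d ∈ Submodule.span K (emon A '' (boxk A k)) := by
  classical
  set r : Fin m → Polynomial K := fun i => redPow (A i) (d i) with hr
  have hkey : emon A d = ∑ c ∈ Fintype.piFinset (fun i => Finset.range ((r i).natDegree + 1)),
      (∏ i, (r i).coeff (c i)) • emon A c := by
    funext a
    have h1 : emon A d a = ∏ i, (r i).eval (a.1 i) := by
      refine Finset.prod_congr rfl fun i _ => ?_
      rw [redPow_eval _ _ (a.2 i)]
    rw [h1]
    calc ∏ i, (r i).eval (a.1 i)
        = ∏ i, ∑ j ∈ Finset.range ((r i).natDegree + 1), (r i).coeff j * (a.1 i) ^ j := by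
          exact Finset.prod_congr rfl fun i _ => Polynomial.eval_eq_sum_range _
      _ = ∑ c ∈ Fintype.piFinset (fun i => Finset.range ((r i).natDegree + 1)),
            ∏ i, ((r i).coeff (c i) * (a.1 i) ^ (c i)) := Finset.prod_univ_sum _ _
      _ = _ := by
          rw [Finset.sum_apply]
          refine Finset.sum_congr rfl fun c _ => ?_
          rw [Finset.prod_mul_distrib, Pi.smul_apply, smul_eq_mul]
          rfl
  rw [hkey]
  refine Submodule.sum_mem _ fun c hc => Submodule.smul_mem _ _ (Submodule.subset_span ⟨c, ?_, rfl⟩)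
  rw [Fintype.mem_piFinset] at hc
  simp only [boxk, Finset.coe_filter, Set.mem_setOf_eq, Finset.mem_filter, fullbox,
    Fintype.mem_piFinset, Finset.mem_range]
  constructor
  · intro i
    have h1 := hc i
    rw [Finset.mem_range] at h1
    have h2 : (r i).natDegree < (A i).card := redPow_natDegree_lt (A i) (hA i) (d i)
    omega
  · have h3 : ∀ i, c i ≤ d i := by
      intro i
      have h1 := hc i
      rw [Finset.mem_range] at h1
      have h2 : (r i).natDegree ≤ d i := redPow_natDegree_le (A i) (d i)
      omega
    exact lt_of_le_of_lt (Finset.sum_le_sum fun i _ => h3 i) hd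

lemma ev0_mem_span [Fintype K] (hA : ∀ i, (A i).Nonempty) {k : ℕ} {f : MvPolynomial (Fin m) K}
    (hf : ∀ d ∈ f.support, (d.sum fun _ e => e) < k) :
    ev0 A f ∈ Submodule.span K (emon A '' (boxk A k)) := by
  have hkey : ev0 A f = ∑ d ∈ f.support, coeff d f • emon A (fun i => d i) := by
    funext a
    rw [ev0_apply, MvPolynomial.eval_eq']
    rw [Finset.sum_apply]
    rfl
  rw [hkey]
  refine Submodule.sum_mem _ fun d hd => Submodule.smul_mem _ _ (emon_mem_span A hA ?_)
  have h1 := hf d hd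
  rwa [Finsupp.sum_fintype _ _ fun _ => rfl] at h1

lemma map_ev0_degLT [Fintype K] (hA : ∀ i, (A i).Nonempty) (k : ℕ) :
    Submodule.map (ev0 A) (degLT K m k) = Submodule.span K (emon A '' (boxk A k)) := by
  apply le_antisymm
  · rintro _ ⟨f, hf, rfl⟩
    exact ev0_mem_span A hA hf
  · rw [Submodule.span_le]
    rintro _ ⟨c, hc, rfl⟩
    simp only [boxk, Finset.coe_filter, Set.mem_setOf_eq, fullbox, Fintype.mem_piFinset,
      Finset.mem_range] at hc
    refine ⟨MvPolynomial.monomial (Finsupp.equivFunOnFinite.symm c) 1, ?_, ?_⟩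
    · intro d hd
      rw [MvPolynomial.support_monomial] at hd
      rw [if_neg one_ne_zero] at hd
      rw [Finset.mem_singleton] at hd
      subst hd
      rw [Finsupp.sum_fintype _ _ fun _ => rfl]
      simpa using hc.2
    · funext a
      rw [ev0_apply, MvPolynomial.eval_monomial, one_mul, Finsupp.prod_pow]
      simp [emon]

end Aux2

section Aux3

open Module

variable {K : Type*} [Field K] [DecidableEq K] {m : ℕ} (A : Fin m → Finset K)

def cartEquiv : CartPts A ≃ ((i : Fin m) → {x // x ∈ A i}) where
  toFun a := fun i => ⟨a.1 i, a.2 i⟩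
  invFun b := ⟨fun i => (b i).1, fun i => (b i).2⟩
  left_inv a := rfl
  right_inv b := rfl

lemma card_cartPts [Fintype K] : Fintype.card (CartPts A) = ∏ i, (A i).card := by
  rw [Fintype.card_congr (cartEquiv A), Fintype.card_pi]
  simp [Fintype.card_coe]

lemma finrank_fun [Fintype K] : finrank K (CartPts A → K) = ∏ i, (A i).card := by
  rw [Module.finrank_pi, card_cartPts]

lemma top_le_span_fullbox [Fintype K] (hA : ∀ i, (A i).Nonempty) :
    ⊤ ≤ Submodule.span K (emon A '' (fullbox A : Set (Fin m → ℕ))) := by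
  intro w _
  rw [pi_eq_sum_univ w]
  refine Submodule.sum_mem _ fun a _ => Submodule.smul_mem _ _ ?_
  have hne := eval_LaPoly_self_ne_zero A a.2
  have hdelta : (fun j => if a = j then (1:K) else 0) =
      (eval (a.1 : Fin m → K) (LaPoly A a.1))⁻¹ • ev0 A (LaPoly A a.1) := by
    rw [ev0_LaPoly]
    funext b
    by_cases h : a = b
    · subst h; simp [inv_mul_cancel₀ hne]
    · simp [h]
  rw [hdelta]
  refine Submodule.smul_mem _ _ ?_
  have hmono : Submodule.span K (emon A '' (boxk A (∑ i, ((A i).card - 1) + 1) : Set (Fin m → ℕ)))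
      ≤ Submodule.span K (emon A '' (fullbox A : Set (Fin m → ℕ))) := by
    refine Submodule.span_mono (Set.image_mono ?_)
    exact_mod_cast Finset.filter_subset _ _
  refine hmono (ev0_mem_span A hA fun d hd => ?_)
  have h1 : (d.sum fun _ e => e) ≤ (LaPoly A a.1).totalDegree := MvPolynomial.le_totalDegree hd
  have h2 := totalDegree_LaPoly_le A a.2
  omega

lemma range_restrict_finset {α β : Type*} (f : α → β) (s : Finset α) :
    (Set.range fun x : {y // y ∈ s} => f (x : α)) = f '' (s : Set α) := by
  ext b
  constructor
  · rintro ⟨⟨a, ha⟩, rfl⟩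
    exact ⟨a, ha, rfl⟩
  · rintro ⟨a, ha, rfl⟩
    exact ⟨⟨a, ha⟩, rfl⟩

lemma linearIndependent_emon [Fintype K] (hA : ∀ i, (A i).Nonempty) :
    LinearIndependent K (fun d : (fullbox A : Finset (Fin m → ℕ)) => emon A (d : Fin m → ℕ)) := by
  have hspan : ⊤ ≤ Submodule.span K
      (Set.range fun d : (fullbox A : Finset (Fin m → ℕ)) => emon A (d : Fin m → ℕ)) := by
    rw [range_restrict_finset]
    exact top_le_span_fullbox A hA
  have hcard : Fintype.card (fullbox A : Finset (Fin m → ℕ)) = finrank K (CartPts A → K) := by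
    rw [Fintype.card_coe, fullbox, Fintype.card_piFinset, finrank_fun]
    simp
  have hb := coe_basisOfTopLeSpanOfCardEqFinrank _ hspan hcard
  have := (basisOfTopLeSpanOfCardEqFinrank _ hspan hcard).linearIndependent
  rwa [hb] at this

lemma finrank_span_boxk [Fintype K] (hA : ∀ i, (A i).Nonempty) (k : ℕ) :
    finrank K (Submodule.span K (emon A '' (boxk A k : Set (Fin m → ℕ)))) = (boxk A k).card := by
  have hsub : boxk A k ⊆ fullbox A := Finset.filter_subset _ _
  have li : LinearIndependent K (fun c : (boxk A k : Finset (Fin m → ℕ)) => emon A (c : Fin m → ℕ)) := by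
    have := (linearIndependent_emon A hA).comp
      (fun c : (boxk A k : Finset (Fin m → ℕ)) => (⟨c.1, hsub c.2⟩ : (fullbox A : Finset (Fin m → ℕ))))
      (fun a b h => by
        apply Subtype.ext
        have h2 := congrArg Subtype.val h
        simpa using h2)
    exact this
  have h := finrank_span_eq_card li
  rw [range_restrict_finset] at h
  rw [h, Fintype.card_coe]

noncomputable def Tv [Fintype K] (v : CartPts A → K) (hv : ∀ a, v a ≠ 0) :
    (CartPts A → K) ≃ₗ[K] (CartPts A → K) :=
  LinearEquiv.piCongrRight fun a => LinearEquiv.smulOfNeZero K K (v a) (hv a)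

lemma evalLM_eq [Fintype K] (v : CartPts A → K) (hv : ∀ a, v a ≠ 0) :
    evalLM A v = (Tv A v hv).toLinearMap ∘ₗ ev0 A := rfl

lemma cartCode_eq [Fintype K] (hA : ∀ i, (A i).Nonempty) (v : CartPts A → K) (hv : ∀ a, v a ≠ 0)
    (k : ℕ) :
    cartCode k A v = Submodule.map (Tv A v hv).toLinearMap
      (Submodule.span K (emon A '' (boxk A k : Set (Fin m → ℕ)))) := by
  rw [cartCode, evalLM_eq A v hv, Submodule.map_comp, map_ev0_degLT A hA k]

lemma finrank_cartCode [Fintype K] (hA : ∀ i, (A i).Nonempty) (v : CartPts A → K)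
    (hv : ∀ a, v a ≠ 0) (k : ℕ) :
    finrank K (cartCode k A v) = (boxk A k).card := by
  rw [cartCode_eq A hA v hv k, LinearEquiv.finrank_map_eq, finrank_span_boxk A hA]

lemma mem_fullbox {d : Fin m → ℕ} : d ∈ fullbox A ↔ ∀ i, d i < (A i).card := by
  simp [fullbox, Fintype.mem_piFinset]

def reflbox (d : Fin m → ℕ) : Fin m → ℕ := fun i => (A i).card - 1 - d i

lemma card_boxk_add (hA : ∀ i, (A i).Nonempty) {k : ℕ} (hk : 1 ≤ k)
    (hk2 : k ≤ ∑ i, ((A i).card - 1)) :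
    (boxk A k).card + (boxk A (∑ i, ((A i).card - 1) - k + 1)).card = ∏ i, (A i).card := by
  have hpos : ∀ i, 1 ≤ (A i).card := fun i => Finset.card_pos.mpr (hA i)
  have hsum : ∀ d : Fin m → ℕ, (∀ i, d i < (A i).card) →
      (∑ i, d i) + (∑ i, reflbox A d i) = ∑ i, ((A i).card - 1) := by
    intro d hd
    rw [← Finset.sum_add_distrib]
    refine Finset.sum_congr rfl fun i _ => ?_
    have := hd i
    simp only [reflbox]
    omega
  have h1 := Finset.card_filter_add_card_filter_not (s := fullbox A)
    (p := fun d => ∑ i, d i < k)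
  have h2 : (Finset.filter (fun d => ¬ (∑ i, d i < k)) (fullbox A)).card
      = (boxk A (∑ i, ((A i).card - 1) - k + 1)).card := by
    refine Finset.card_bij' (fun d _ => reflbox A d) (fun d _ => reflbox A d) ?_ ?_ ?_ ?_
    · intro d hd
      clear h1
      simp only [Finset.mem_filter, mem_fullbox] at hd
      obtain ⟨hdbox, hdk⟩ := hd
      have hs := hsum d hdbox
      simp only [boxk, Finset.mem_filter, mem_fullbox]
      constructor
      · intro i
        have h5 := hpos i
        have h6 := hdbox i
        simp only [reflbox]
        omega
      · omega
    · intro d hd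
      clear h1
      simp only [boxk, Finset.mem_filter, mem_fullbox] at hd
      obtain ⟨hdbox, hdk⟩ := hd
      have hs := hsum d hdbox
      simp only [Finset.mem_filter, mem_fullbox]
      constructor
      · intro i
        have h5 := hpos i
        have h6 := hdbox i
        simp only [reflbox]
        omega
      · omega
    · intro d hd
      clear h1
      simp only [Finset.mem_filter, mem_fullbox] at hd
      funext i
      have h3 := hd.1 i
      have h5 := hpos i
      simp only [reflbox]
      omega
    · intro d hd
      clear h1
      simp only [boxk, Finset.mem_filter, mem_fullbox] at hd
      funext i
      have h3 := hd.1 i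
      have h5 := hpos i
      simp only [reflbox]
      omega
  have h4 : (fullbox A).card = ∏ i, (A i).card := by
    rw [fullbox, Fintype.card_piFinset]; simp
  rw [boxk, ← h4, ← h2, h1]

end Aux3

section Aux4

open Module

variable {K : Type*} [Field K] {ι : Type*} [Fintype ι] [DecidableEq ι]

noncomputable def dotForm : LinearMap.BilinForm K (ι → K) :=
  LinearMap.mk₂ K (fun w c => ∑ i, w i * c i)
    (fun m₁ m₂ n => by simp [add_mul, Finset.sum_add_distrib])
    (fun c m n => by simp [Finset.mul_sum, mul_assoc])
    (fun m n₁ n₂ => by simp [mul_add, Finset.sum_add_distrib])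
    (fun c m n => by simp [Finset.mul_sum]; ring_nf; simp [mul_comm, mul_left_comm])

lemma dotForm_apply (w c : ι → K) : dotForm w c = ∑ i, w i * c i := rfl

lemma dotForm_comm (w c : ι → K) : dotForm w c = dotForm c w := by
  simp only [dotForm_apply]
  exact Finset.sum_congr rfl fun i _ => mul_comm _ _

lemma dotForm_isRefl : (dotForm (K := K) (ι := ι)).IsRefl := fun x y h => by
  rw [dotForm_comm] at h; exact h

lemma dualCode_eq_orthogonal (C : Submodule K (ι → K)) :
    dualCode C = (dotForm (K := K) (ι := ι)).orthogonal C := by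
  ext w
  constructor
  · intro hw
    intro c hc
    rw [dotForm_comm]
    exact hw c hc
  · intro hw c hc
    have := hw c hc
    rw [dotForm_comm] at this
    exact this

lemma dotForm_orthogonal_top :
    (dotForm (K := K) (ι := ι)).orthogonal ⊤ = ⊥ := by
  rw [Submodule.eq_bot_iff]
  intro x hx
  funext i
  have h := hx (Pi.single i 1) Submodule.mem_top
  rw [dotForm_apply] at h
  simpa [Pi.single_apply] using h

lemma finrank_dualCode (C : Submodule K (ι → K)) :
    finrank K (dualCode C) + finrank K C = Fintype.card ι := by
  rw [dualCode_eq_orthogonal]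
  have h := LinearMap.BilinForm.finrank_add_finrank_orthogonal
    (B := dotForm (K := K) (ι := ι)) dotForm_isRefl C
  rw [dotForm_orthogonal_top, inf_bot_eq, finrank_bot, add_zero, Module.finrank_pi] at h
  omega

end Aux4

section Aux5

open Module

variable {K : Type*} [Field K] [DecidableEq K] {m : ℕ} (A : Fin m → Finset K)

lemma evalLM_apply (v : CartPts A → K) (f : MvPolynomial (Fin m) K) (a : CartPts A) :
    evalLM A v f a = v a * eval (a.1 : Fin m → K) f := by
  have h1 : (MvPolynomial.aeval (a.1 : Fin m → K)) f = eval (a.1 : Fin m → K) f := by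
    rw [MvPolynomial.aeval_def, Algebra.algebraMap_self, MvPolynomial.eval₂_id]
  show v a • (MvPolynomial.aeval (a.1 : Fin m → K)) f = _
  rw [h1, smul_eq_mul]

lemma totalDegree_le_of_mem_degLT {k : ℕ} {f : MvPolynomial (Fin m) K} (hf : f ∈ degLT K m k) :
    f.totalDegree ≤ k - 1 := by
  refine Finset.sup_le fun d hd => ?_
  have := hf d hd
  omega

lemma sum_eval_inv_LaPoly [Fintype K] (hA : ∀ i, (A i).Nonempty) {h : MvPolynomial (Fin m) K}
    (hdeg : h.totalDegree + 1 ≤ ∑ i, ((A i).card - 1)) :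
    ∑ a : CartPts A,
      (eval (a.1 : Fin m → K) (LaPoly A a.1))⁻¹ * eval (a.1 : Fin m → K) h = 0 := by
  have hterm : ∀ a : CartPts A,
      (eval (a.1 : Fin m → K) (LaPoly A a.1))⁻¹ * eval (a.1 : Fin m → K) h
      = ∑ d ∈ h.support, coeff d h *
          ∏ i, ((a.1 i) ^ d i * (∏ c ∈ (A i).erase (a.1 i), (a.1 i - c))⁻¹) := by
    intro a
    rw [eval_LaPoly, ← Finset.prod_inv_distrib, MvPolynomial.eval_eq', Finset.mul_sum]
    refine Finset.sum_congr rfl fun d hd => ?_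
    rw [Finset.prod_mul_distrib]
    ring
  rw [Finset.sum_congr rfl fun a _ => hterm a, Finset.sum_comm]
  refine Finset.sum_eq_zero fun d hd => ?_
  rw [← Finset.mul_sum]
  have hprod : ∑ a : CartPts A,
      ∏ i, ((a.1 i) ^ d i * (∏ c ∈ (A i).erase (a.1 i), (a.1 i - c))⁻¹)
      = ∏ i, ∑ α ∈ A i, (α ^ d i * (∏ c ∈ (A i).erase α, (α - c))⁻¹) := by
    have e1 : ∑ a : CartPts A, (∏ i, ((a.1 i) ^ d i * (∏ c ∈ (A i).erase (a.1 i), (a.1 i - c))⁻¹))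
        = ∑ x ∈ Fintype.piFinset A, ∏ i, (x i ^ d i * (∏ c ∈ (A i).erase (x i), (x i - c))⁻¹) :=
      (Finset.sum_subtype (p := fun x : Fin m → K => ∀ i, x i ∈ A i)
        (Fintype.piFinset A) (fun x => Fintype.mem_piFinset)
        (fun x => ∏ i, (x i ^ d i * (∏ c ∈ (A i).erase (x i), (x i - c))⁻¹))).symm
    rw [e1]
    exact (Finset.prod_univ_sum (t := fun i => A i)
      (f := fun i α => α ^ d i * (∏ c ∈ (A i).erase α, (α - c))⁻¹)).symm
  rw [hprod]
  have hsup : (∑ i, d i) ≤ h.totalDegree := by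
    have h1 := MvPolynomial.le_totalDegree hd
    rwa [Finsupp.sum_fintype _ _ fun _ => rfl] at h1
  have hex : ∃ i, d i + 1 < (A i).card := by
    by_contra hc
    push_neg at hc
    have h2 : ∑ i, ((A i).card - 1) ≤ ∑ i, d i :=
      Finset.sum_le_sum fun i _ => by have := hc i; omega
    omega
  obtain ⟨i0, hi0⟩ := hex
  rw [Finset.prod_eq_zero (Finset.mem_univ i0) (sum_pow_mul_inv_prod (A i0) (d i0) hi0), mul_zero]

lemma code_le_dual [Fintype K] (hA : ∀ i, (A i).Nonempty) (v : CartPts A → K)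
    (hv : ∀ a, v a ≠ 0) {k k' : ℕ} (hk : 1 ≤ k) (hk' : 1 ≤ k')
    (hkk : (k - 1) + (k' - 1) + 1 ≤ ∑ i, ((A i).card - 1)) :
    cartCode k' A (fun a => (v a * eval (a.1 : Fin m → K) (LaPoly A a.1))⁻¹)
      ≤ dualCode (cartCode k A v) := by
  rintro _ ⟨g, hg, rfl⟩ c hc
  obtain ⟨f, hf, rfl⟩ := hc
  have hterm : ∀ a : CartPts A,
      evalLM A (fun a => (v a * eval (a.1 : Fin m → K) (LaPoly A a.1))⁻¹) g a * evalLM A v f a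
      = (eval (a.1 : Fin m → K) (LaPoly A a.1))⁻¹ * eval (a.1 : Fin m → K) (g * f) := by
    intro a
    have hva := hv a
    have hLa := eval_LaPoly_self_ne_zero A a.2
    rw [evalLM_apply, evalLM_apply, map_mul, mul_inv_rev]
    field_simp
  show ∑ a : CartPts A, _ * _ = 0
  rw [Finset.sum_congr rfl fun a _ => hterm a]
  refine sum_eval_inv_LaPoly A hA ?_
  have h1 := totalDegree_le_of_mem_degLT hg
  have h2 := totalDegree_le_of_mem_degLT hf
  have h3 := MvPolynomial.totalDegree_mul g f
  omega

end Aux5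


/-- The dual of `C_k(𝒜, v)` is `C_{k'}(𝒜, v')`, where `k' = Σ (n_i − 1) − k + 1` and
`v'_a = (v_a · L_a(a))⁻¹`. -/
theorem dual_cartCode {K : Type*} [Field K] [Fintype K] [DecidableEq K]
    {m : ℕ} (hm : 1 ≤ m) (A : Fin m → Finset K) (hA : ∀ i, (A i).Nonempty)
    (v : CartPts A → K) (hv : ∀ a, v a ≠ 0) (k : ℕ) (hk : 1 ≤ k)
    (hk2 : k ≤ ∑ i, ((A i).card - 1)) :
    dualCode (cartCode k A v) =
      cartCode (∑ i, ((A i).card - 1) - k + 1) A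
        (fun a => (v a * MvPolynomial.eval (a.1 : Fin m → K) (LaPoly A a.1))⁻¹) := by
  have hN1 : 1 ≤ ∑ i, ((A i).card - 1) := le_trans hk hk2
  set v' : CartPts A → K :=
    fun a => (v a * MvPolynomial.eval (a.1 : Fin m → K) (LaPoly A a.1))⁻¹ with hv'def
  have hv' : ∀ a, v' a ≠ 0 := fun a =>
    inv_ne_zero (mul_ne_zero (hv a) (eval_LaPoly_self_ne_zero A a.2))
  have hle := code_le_dual A hA v hv (k' := ∑ i, ((A i).card - 1) - k + 1) hk
    (by omega) (by omega)
  refine (Submodule.eq_of_le_of_finrank_le hle ?_).symm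
  have h1 := finrank_dualCode (cartCode k A v)
  rw [finrank_cartCode A hA v hv k, card_cartPts A] at h1
  rw [finrank_cartCode A hA v' hv' _]
  have h2 := card_boxk_add A hA hk hk2
  omega
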